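/- If Σ a_n is a divergent series of positive real numbers, then the continued fraction 1/(a_1 z + 1/(a_2 + 1/(a_3 z + 1/(a_4 + ...)))) converges for every real z > 0. -/

import Mathlib

open Filter

/-- Partial denominators of the Stieltjes continued fraction: `a k * z` for odd `k`,
`a k` for even `k ≥ 2` (all partial numerators are `1`). -/
noncomputable def stielQ (a : ℕ → ℝ) (z : ℝ) (k : ℕ) : ℝ :=
  if k % 2 = 1 then a k * z else a k

/-- Numerators of the convergents (`stielA a z (k+1)` is `A_k`, `A_{-1} = 1`, `A_0 = 0`). -/
noncomputable def stielA (a : ℕ → ℝ) (z : ℝ) : ℕ → ℝ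
  | 0 => 1
  | 1 => 0
  | n + 2 => stielQ a z (n + 1) * stielA a z (n + 1) + stielA a z n

/-- Denominators of the convergents (`stielB a z (k+1)` is `B_k`, `B_{-1} = 0`, `B_0 = 1`). -/
noncomputable def stielB (a : ℕ → ℝ) (z : ℝ) : ℕ → ℝ
  | 0 => 0
  | 1 => 1
  | n + 2 => stielQ a z (n + 1) * stielB a z (n + 1) + stielB a z n


/-!
Write `B n` for the denominators and `q k` for the partial denominators. The determinant formula
makes the convergents the partial sums of the alternating series `∑ (-1)^k / (B (k+1) B (k+2))`.
Since `q k > 0`, `B (n+2) ≥ B n`, so the terms decrease and every `B (n+1)` is at least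
`c = min 1 (q 1)`. Then `B (n+2) - B n = q (n+1) B (n+1) ≥ c q (n+1)` telescopes to
`B n + B (n+1) ≥ c ∑_{k<n} q (k+1)`, which diverges because `q k ≥ min z 1 · a k`. Hence
`B (n+1) B (n+2) ≥ (c/2) (B (n+1) + B (n+2)) → ∞`, and the alternating series test concludes.
-/

lemma min_le_of_le_add_two {α : Type*} [LinearOrder α] {u : ℕ → α}
    (h : ∀ n, u n ≤ u (n + 2)) : ∀ n, min (u 0) (u 1) ≤ u n
  | 0 => min_le_left _ _
  | 1 => min_le_right _ _
  | n + 2 => (min_le_of_le_add_two h n).trans (h n)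

section Stieltjes

variable {a : ℕ → ℝ} {z : ℝ}

lemma stielQ_succ_pos (ha : ∀ n, 1 ≤ n → 0 < a n) (hz : 0 < z) (k : ℕ) :
    0 < stielQ a z (k + 1) := by
  unfold stielQ
  split_ifs
  · exact mul_pos (ha _ (Nat.le_add_left 1 k)) hz
  · exact ha _ (Nat.le_add_left 1 k)

lemma min_mul_le_stielQ {k : ℕ} (hak : 0 ≤ a k) : min z 1 * a k ≤ stielQ a z k := by
  unfold stielQ
  split_ifs
  · rw [mul_comm (a k)]
    exact mul_le_mul_of_nonneg_right (min_le_left _ _) hak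
  · simpa using mul_le_mul_of_nonneg_right (min_le_right z 1) hak

lemma not_summable_stielQ (ha : ∀ n, 1 ≤ n → 0 < a n) (hz : 0 < z)
    (hdiv : ¬ Summable fun n => a (n + 1)) : ¬ Summable fun k => stielQ a z (k + 1) := by
  intro hq
  have hm : (0 : ℝ) < min z 1 := lt_min hz one_pos
  refine hdiv ((summable_mul_left_iff hm.ne').mp (hq.of_nonneg_of_le (fun k => ?_) fun k => ?_))
  · exact mul_nonneg hm.le (ha _ (Nat.le_add_left 1 k)).le
  · exact min_mul_le_stielQ (ha _ (Nat.le_add_left 1 k)).le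

lemma stiel_determinant (n : ℕ) :
    stielA a z (n + 1) * stielB a z n - stielA a z n * stielB a z (n + 1) = (-1) ^ (n + 1) := by
  induction n with
  | zero => simp [stielA, stielB]
  | succ n ih =>
    rw [stielA, stielB, pow_succ]
    linear_combination -ih

lemma stielB_nonneg (hq : ∀ k, 0 < stielQ a z (k + 1)) : ∀ n, 0 ≤ stielB a z n
  | 0 => le_rfl
  | 1 => zero_le_one
  | n + 2 => by
    rw [stielB]
    have := stielB_nonneg hq n
    have := stielB_nonneg hq (n + 1)
    have := hq n
    positivity

lemma stielB_succ_pos (hq : ∀ k, 0 < stielQ a z (k + 1)) : ∀ n, 0 < stielB a z (n + 1)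
  | 0 => one_pos
  | n + 1 => by
    rw [stielB]
    exact add_pos_of_pos_of_nonneg (mul_pos (hq n) (stielB_succ_pos hq n)) (stielB_nonneg hq n)

lemma stielB_le_add_two (hq : ∀ k, 0 < stielQ a z (k + 1)) (n : ℕ) :
    stielB a z n ≤ stielB a z (n + 2) := by
  rw [stielB]
  have := mul_pos (hq n) (stielB_succ_pos hq n)
  linarith

lemma min_one_stielQ_le_stielB (hq : ∀ k, 0 < stielQ a z (k + 1)) (n : ℕ) :
    min 1 (stielQ a z 1) ≤ stielB a z (n + 1) := by
  simpa [stielB] using min_le_of_le_add_two (u := fun n => stielB a z (n + 1))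
    (fun n => stielB_le_add_two hq (n + 1)) n

lemma min_one_stielQ_mul_sum_le (hq : ∀ k, 0 < stielQ a z (k + 1)) (n : ℕ) :
    min 1 (stielQ a z 1) * ∑ k ∈ Finset.range n, stielQ a z (k + 1)
      ≤ stielB a z n + stielB a z (n + 1) := by
  induction n with
  | zero => simp [stielB]
  | succ n ih =>
    have := mul_le_mul_of_nonneg_right (min_one_stielQ_le_stielB hq n) (hq n).le
    rw [Finset.sum_range_succ, mul_add, stielB]
    linarith

lemma tendsto_stielB_mul (hq : ∀ k, 0 < stielQ a z (k + 1))
    (hdiv : ¬ Summable fun k => stielQ a z (k + 1)) :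
    Tendsto (fun n => stielB a z (n + 1) * stielB a z (n + 2)) atTop atTop := by
  set c := min 1 (stielQ a z 1)
  have hc : 0 < c := lt_min one_pos (hq 0)
  have hsum : Tendsto (fun n => stielB a z n + stielB a z (n + 1)) atTop atTop :=
    tendsto_atTop_mono (min_one_stielQ_mul_sum_le hq) <| Tendsto.const_mul_atTop hc <|
      (not_summable_iff_tendsto_nat_atTop_of_nonneg fun k => (hq k).le).mp hdiv
  refine tendsto_atTop_mono (fun n => ?_)
    (((tendsto_add_atTop_iff_nat 1).mpr hsum).const_mul_atTop (half_pos hc))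
  have h1 := min_one_stielQ_le_stielB hq n
  have h2 := min_one_stielQ_le_stielB hq (n + 1)
  nlinarith

lemma monotone_stielB_mul (hq : ∀ k, 0 < stielQ a z (k + 1)) :
    Monotone fun n => stielB a z (n + 1) * stielB a z (n + 2) :=
  monotone_nat_of_le_succ fun n => by
    rw [mul_comm]
    exact mul_le_mul_of_nonneg_left (stielB_le_add_two hq (n + 1)) (stielB_succ_pos hq (n + 1)).le

lemma stiel_convergent_succ_sub (hq : ∀ k, 0 < stielQ a z (k + 1)) (n : ℕ) :
    stielA a z (n + 2) / stielB a z (n + 2) - stielA a z (n + 1) / stielB a z (n + 1)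
      = (-1) ^ n * (stielB a z (n + 1) * stielB a z (n + 2))⁻¹ := by
  have h1 := (stielB_succ_pos hq n).ne'
  have h2 := (stielB_succ_pos hq (n + 1)).ne'
  have hdet := stiel_determinant (a := a) (z := z) (n + 1)
  field_simp
  linear_combination hdet

lemma stiel_convergent_eq_sum (hq : ∀ k, 0 < stielQ a z (k + 1)) (N : ℕ) :
    stielA a z (N + 1) / stielB a z (N + 1)
      = ∑ k ∈ Finset.range N, (-1) ^ k * (stielB a z (k + 1) * stielB a z (k + 2))⁻¹ := by
  have h := Finset.sum_range_sub (fun n => stielA a z (n + 1) / stielB a z (n + 1)) N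
  simp only [stiel_convergent_succ_sub hq] at h
  simpa [stielA] using h.symm

end Stieltjes

/-- Stieltjes' convergence theorem: if `Σ a_n` diverges (`a_n > 0`), the continued fraction
`1/(a₁z + 1/(a₂ + 1/(a₃z + …)))` converges for every real `z > 0`. -/
theorem stmt15 (a : ℕ → ℝ) (ha : ∀ n, 1 ≤ n → 0 < a n)
    (hdiv : ¬ Summable fun n => a (n + 1)) (z : ℝ) (hz : 0 < z) :
    ∃ L : ℝ, Tendsto (fun n => stielA a z (n + 1) / stielB a z (n + 1)) atTop (nhds L) := by
  have hq := stielQ_succ_pos ha hz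
  have hanti : Antitone fun n => (stielB a z (n + 1) * stielB a z (n + 2))⁻¹ :=
    fun _ _ hmn => inv_anti₀ (mul_pos (stielB_succ_pos hq _) (stielB_succ_pos hq _))
      (monotone_stielB_mul hq hmn)
  obtain ⟨L, hL⟩ := hanti.tendsto_alternating_series_of_tendsto_zero
    (tendsto_stielB_mul hq (not_summable_stielQ ha hz hdiv)).inv_tendsto_atTop
  exact ⟨L, by simpa only [stiel_convergent_eq_sum hq] using hL⟩
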